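/- arXiv:1504.08251 — 5 statements merged into one kernel-verified Lean document; each statement's English description precedes it below -/
import Mathlib

section
/- Let n be a positive integer, φ ≥ 1 and ε > 0 reals. Let E be a finite index set and let (X_e)_{e∈E} be independent real-valued random variables, each having a probability density function bounded above by φ. Let 𝒞 be a finite family of at most (n+1)! 'cycles', where each C ∈ 𝒞 is a nonempty subset of E of cardinality |C| ≤ n together with signs σ^C_e ∈ {−1,+1} for e ∈ C, and define μ(C) = (∑_{e∈C} σ^C_e X_e)/|C|. Then the probability that there exists C ∈ 𝒞 with μ(C) ∈ [−ε, 0) is at most (n+1)!·n·ε·φ. -/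
open MeasureTheory ProbabilityTheory
open scoped ENNReal

/-!
The law of each edge cost is dominated by `φ • volume`. Domination by a multiple of Lebesgue
measure survives multiplication by `±1` and addition of an independent variable: the law of the
sum is a convolution, and convolving a translation-invariant measure with a probability measure
returns it. So the signed sum over a cycle `C` has law at most `φ • volume`, and its mean lies
in `[-ε, 0)` with probability at most `φ · ε · |C| ≤ n ε φ`. A union bound over the at most
`(n+1)!` cycles concludes.
-/

theorem ProbabilityTheory.map_le_smul_of_pdf_le {Ω E : Type*} [MeasurableSpace Ω]
    [MeasurableSpace E] {P : Measure Ω} {μ : Measure E} {X : Ω → E} [HasPDF X P μ]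
    {c : ℝ≥0∞} (h : ∀ᵐ x ∂μ, pdf X P μ x ≤ c) : P.map X ≤ c • μ := by
  rw [map_eq_withDensity_pdf X P μ, ← withDensity_const]
  exact withDensity_mono h

theorem MeasureTheory.Measure.map_const_mul_le_smul_volume {Ω : Type*} [MeasurableSpace Ω]
    {μ : Measure Ω} {X : Ω → ℝ} (hX : AEMeasurable X μ) {c : ℝ≥0∞} (h : μ.map X ≤ c • volume)
    {a : ℝ} (ha : a ≠ 0) : μ.map (fun ω => a * X ω) ≤ (c * ENNReal.ofReal |a⁻¹|) • volume := by
  calc μ.map (fun ω => a * X ω) = (μ.map X).map (a * ·) :=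
        (AEMeasurable.map_map_of_aemeasurable (measurable_const_mul a).aemeasurable hX).symm
    _ ≤ (c • volume).map (a * ·) := Measure.map_mono h (measurable_const_mul a)
    _ = (c * ENNReal.ofReal |a⁻¹|) • volume := by
        rw [Measure.map_smul, Real.map_volume_mul_left ha, smul_smul]

theorem MeasureTheory.Measure.conv_le_smul_of_le_smul {G : Type*} [AddGroup G]
    [MeasurableSpace G] [MeasurableAdd₂ G] {μ ν ρ : Measure G} [SFinite μ] [SFinite ν]
    [ρ.IsAddRightInvariant] {c : ℝ≥0∞} (hμ : μ ≤ c • ρ) : μ ∗ ν ≤ (c * ν Set.univ) • ρ := by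
  refine Measure.le_iff.2 fun s hs => ?_
  have hadd : MeasurableSet ((fun p : G × G => p.1 + p.2) ⁻¹' s) := measurable_add hs
  rw [Measure.conv, Measure.map_apply measurable_add hs, Measure.prod_apply_symm hadd]
  calc ∫⁻ y, μ ((· + y) ⁻¹' s) ∂ν ≤ ∫⁻ _, c * ρ s ∂ν :=
        lintegral_mono fun _ => (hμ _).trans_eq (by simp)
    _ = (c * ν Set.univ) • ρ s := by simp [mul_right_comm]

theorem ProbabilityTheory.IndepFun.map_add_le_smul {Ω G : Type*} [MeasurableSpace Ω]
    {μ : Measure Ω} [IsProbabilityMeasure μ] [AddGroup G] [MeasurableSpace G]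
    [MeasurableAdd₂ G] {ρ : Measure G} [ρ.IsAddRightInvariant] {Y T : Ω → G}
    (hind : IndepFun Y T μ) (hY : AEMeasurable Y μ) (hT : AEMeasurable T μ) {c : ℝ≥0∞}
    (h : μ.map Y ≤ c • ρ) : μ.map (Y + T) ≤ c • ρ := by
  have : IsProbabilityMeasure (μ.map T) := Measure.isProbabilityMeasure_map hT
  simpa [hind.map_add_eq_map_conv_map₀ hY hT] using Measure.conv_le_smul_of_le_smul (ν := μ.map T) h

theorem ProbabilityTheory.iIndepFun.map_finsetSum_le_smul {Ω ι G : Type*} [MeasurableSpace Ω]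
    {μ : Measure Ω} [IsProbabilityMeasure μ] [AddCommGroup G] [MeasurableSpace G]
    [MeasurableAdd₂ G] {ρ : Measure G} [ρ.IsAddRightInvariant] {Y : ι → Ω → G}
    (hind : iIndepFun Y μ) (hY : ∀ i, AEMeasurable (Y i) μ) {s : Finset ι} {i : ι} (hi : i ∈ s)
    {c : ℝ≥0∞} (h : μ.map (Y i) ≤ c • ρ) : μ.map (∑ j ∈ s, Y j) ≤ c • ρ := by
  classical
  rw [← Finset.add_sum_erase s Y hi]
  exact (hind.indepFun_finsetSum_of_notMem₀ hY (s.notMem_erase i)).symm.map_add_le_smul (hY i)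
    (Finset.aemeasurable_sum _ fun j _ => hY j) h

theorem ProbabilityTheory.iIndepFun.measure_signedMean_mem_Ico_le {Ω E : Type*}
    [MeasurableSpace Ω] {μ : Measure Ω} [IsProbabilityMeasure μ] {X : E → Ω → ℝ}
    (hind : iIndepFun X μ) (hX : ∀ e, AEMeasurable (X e) μ) {c : ℝ≥0∞}
    (hlaw : ∀ e, μ.map (X e) ≤ c • volume) {s : Finset E} (hs : s.Nonempty) {σ : E → ℝ}
    (hσ : ∀ e ∈ s, σ e = 1 ∨ σ e = -1) (ε : ℝ) :
    μ {ω | (∑ e ∈ s, σ e * X e ω) / s.card ∈ Set.Ico (-ε) 0}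
      ≤ c * s.card * ENNReal.ofReal ε := by
  obtain ⟨e₀, he₀⟩ := hs
  have hσX : ∀ e, AEMeasurable (fun ω => σ e * X e ω) μ := fun e => (hX e).const_mul _
  have hσ₀ : σ e₀ ≠ 0 ∧ |(σ e₀)⁻¹| = 1 := by rcases hσ e₀ he₀ with h | h <;> simp [h]
  have hsum : μ.map (∑ e ∈ s, fun ω => σ e * X e ω) ≤ c • volume := by
    refine (hind.comp (fun e x => σ e * x) fun e => measurable_const_mul _).map_finsetSum_le_smul
      hσX he₀ ?_
    simpa [hσ₀.2, Function.comp_def] using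
      Measure.map_const_mul_le_smul_volume (hX e₀) (hlaw e₀) hσ₀.1
  have hcard : (s.card : ℝ)⁻¹ ≠ 0 := inv_ne_zero (Nat.cast_ne_zero.2 (s.card_ne_zero_of_mem he₀))
  have hmean := Measure.map_const_mul_le_smul_volume
    (Finset.aemeasurable_sum _ fun e _ => hσX e) hsum hcard
  simp only [Finset.sum_apply] at hmean
  calc μ {ω | (∑ e ∈ s, σ e * X e ω) / s.card ∈ Set.Ico (-ε) 0}
      = μ ((fun ω => (s.card : ℝ)⁻¹ * ∑ e ∈ s, σ e * X e ω) ⁻¹' Set.Ico (-ε) 0) := by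
        simp only [div_eq_inv_mul]; rfl
    _ ≤ μ.map (fun ω => (s.card : ℝ)⁻¹ * ∑ e ∈ s, σ e * X e ω) (Set.Ico (-ε) 0) :=
        Measure.le_map_apply (by fun_prop) _
    _ ≤ c * s.card * ENNReal.ofReal ε := by
        simpa using hmean (Set.Ico (-ε) 0)

theorem stmt2_general {Ω : Type*} [MeasureSpace Ω] [IsProbabilityMeasure (ℙ : Measure Ω)]
    (n : ℕ) (φ ε : ℝ) (hφ : 1 ≤ φ) (hε : 0 < ε)
    {E : Type*}
    (X : E → Ω → ℝ)
    (hindep : iIndepFun X ℙ)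
    (hpdf : ∀ e, HasPDF (X e) ℙ volume)
    (hbound : ∀ e, ∀ᵐ x ∂(volume : Measure ℝ), pdf (X e) ℙ volume x ≤ ENNReal.ofReal φ)
    {I : Type*} [Fintype I] (hI : Fintype.card I ≤ Nat.factorial (n + 1))
    (C : I → Finset E) (hCne : ∀ j, (C j).Nonempty) (hCn : ∀ j, (C j).card ≤ n)
    (σ : I → E → ℝ) (hσ : ∀ j, ∀ e ∈ C j, σ j e = 1 ∨ σ j e = -1) :
    (ℙ {ω | ∃ j, (∑ e ∈ C j, σ j e * X e ω) / ((C j).card : ℝ) ∈ Set.Ico (-ε) 0}).toReal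
      ≤ Nat.factorial (n + 1) * n * ε * φ := by
  have hlaw : ∀ e, (ℙ : Measure Ω).map (X e) ≤ ENNReal.ofReal φ • volume := fun e =>
    map_le_smul_of_pdf_le (hbound e)
  have hcycle : ∀ j, ℙ {ω | (∑ e ∈ C j, σ j e * X e ω) / ((C j).card : ℝ) ∈ Set.Ico (-ε) 0}
      ≤ ENNReal.ofReal φ * n * ENNReal.ofReal ε := fun j =>
    (hindep.measure_signedMean_mem_Ico_le (fun e => (hpdf e).aemeasurable') hlaw (hCne j) (hσ j)
      ε).trans (by gcongr; exact hCn j)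
  have hunion : ℙ {ω | ∃ j, (∑ e ∈ C j, σ j e * X e ω) / ((C j).card : ℝ) ∈ Set.Ico (-ε) 0}
      ≤ (n + 1).factorial * (ENNReal.ofReal φ * n * ENNReal.ofReal ε) := by
    rw [Set.ofPred_exists]
    calc _ ≤ ∑ j, ℙ {ω | (∑ e ∈ C j, σ j e * X e ω) / ((C j).card : ℝ) ∈ Set.Ico (-ε) 0} :=
          measure_iUnion_fintype_le _ _
      _ ≤ Fintype.card I * (ENNReal.ofReal φ * n * ENNReal.ofReal ε) :=
          (Finset.sum_le_sum fun j _ => hcycle j).trans_eq (by simp)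
      _ ≤ _ := by gcongr
  have hφ₀ : 0 ≤ φ := zero_le_one.trans hφ
  calc _ ≤ ((n + 1).factorial * (ENNReal.ofReal φ * n * ENNReal.ofReal ε)).toReal :=
        ENNReal.toReal_mono (by finiteness) hunion
    _ = _ := by
        simp [ENNReal.toReal_ofReal hφ₀, ENNReal.toReal_ofReal hε.le]; ring

/-- Corollary 3: union bound. With independent edge costs `X e`, each with density bounded
by `φ`, and a family of at most `(n+1)!` signed "cycles", each a nonempty subset of edges of
cardinality at most `n`, the probability that some cycle has mean cost in `[−ε, 0)` is at
most `(n+1)!·n·ε·φ`. -/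
theorem stmt2 {Ω : Type*} [MeasureSpace Ω] [IsProbabilityMeasure (ℙ : Measure Ω)]
    (n : ℕ) (hn : 0 < n) (φ ε : ℝ) (hφ : 1 ≤ φ) (hε : 0 < ε)
    {E : Type*} [Fintype E]
    (X : E → Ω → ℝ)
    (hindep : iIndepFun X ℙ)
    (hpdf : ∀ e, HasPDF (X e) ℙ volume)
    (hbound : ∀ e, ∀ᵐ x ∂(volume : Measure ℝ), pdf (X e) ℙ volume x ≤ ENNReal.ofReal φ)
    {I : Type*} [Fintype I] (hI : Fintype.card I ≤ Nat.factorial (n + 1))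
    (C : I → Finset E) (hCne : ∀ j, (C j).Nonempty) (hCn : ∀ j, (C j).card ≤ n)
    (σ : I → E → ℝ) (hσ : ∀ j, ∀ e ∈ C j, σ j e = 1 ∨ σ j e = -1) :
    (ℙ {ω | ∃ j, (∑ e ∈ C j, σ j e * X e ω) / ((C j).card : ℝ) ∈ Set.Ico (-ε) 0}).toReal
      ≤ Nat.factorial (n + 1) * n * ε * φ :=
  stmt2_general n φ ε hφ hε X hindep hpdf hbound hI C hCne hCn σ hσ
end

section
/- Let φ ≥ 64 be a real number and let i be a positive integer with 2i + 5 ≤ log₂(φ) (equivalently 2^{2i+5} ≤ φ). Then for all reals p₁, p₂, p₃, p₄ ∈ [0, 1/φ], q ∈ [−2^{2−2i}, −2^{2−2i} + 1/φ], r₁, …, r₆ ∈ [0, 1/φ], q' ∈ [−2^{2−2i}, −2^{2−2i} + 1/φ], and s ∈ [−2^{1−2i}, −2^{1−2i} + 1/φ]: (q + p₁ + p₂ + p₃ + p₄)/5 < (q' + s + r₁ + r₂ + r₃ + r₄ + r₅ + r₆)/8. In particular (worst case) (−2^{2−2i} + 5/φ)/5 < (−2^{2−2i} − 2^{1−2i})/8.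 -/
/-- Lemma 8: the 5-edge cycle `C₁ = (d,wᵢ,a,u,v,d)` has lower mean cost than the 8-edge
cycle `C₂ = (d,wᵢ,a,u,b,xᵢ,c,v,d)`, for every realization of the edge costs in their
intervals. -/
theorem stmt8 (φ : ℝ) (hφ : 64 ≤ φ) (i : ℕ) (hi : 1 ≤ i)
    (hiφ : (2 : ℝ) ^ (2 * i + 5) ≤ φ) :
    (∀ p₁ p₂ p₃ p₄ q r₁ r₂ r₃ r₄ r₅ r₆ q' s : ℝ,
        p₁ ∈ Set.Icc (0 : ℝ) (1 / φ) → p₂ ∈ Set.Icc (0 : ℝ) (1 / φ) →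
        p₃ ∈ Set.Icc (0 : ℝ) (1 / φ) → p₄ ∈ Set.Icc (0 : ℝ) (1 / φ) →
        q ∈ Set.Icc (-(2 : ℝ) ^ (2 - 2 * (i : ℤ))) (-(2 : ℝ) ^ (2 - 2 * (i : ℤ)) + 1 / φ) →
        r₁ ∈ Set.Icc (0 : ℝ) (1 / φ) → r₂ ∈ Set.Icc (0 : ℝ) (1 / φ) →
        r₃ ∈ Set.Icc (0 : ℝ) (1 / φ) → r₄ ∈ Set.Icc (0 : ℝ) (1 / φ) →
        r₅ ∈ Set.Icc (0 : ℝ) (1 / φ) → r₆ ∈ Set.Icc (0 : ℝ) (1 / φ) →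
        q' ∈ Set.Icc (-(2 : ℝ) ^ (2 - 2 * (i : ℤ))) (-(2 : ℝ) ^ (2 - 2 * (i : ℤ)) + 1 / φ) →
        s ∈ Set.Icc (-(2 : ℝ) ^ (1 - 2 * (i : ℤ))) (-(2 : ℝ) ^ (1 - 2 * (i : ℤ)) + 1 / φ) →
        (q + p₁ + p₂ + p₃ + p₄) / 5 < (q' + s + r₁ + r₂ + r₃ + r₄ + r₅ + r₆) / 8)
    ∧ (-(2 : ℝ) ^ (2 - 2 * (i : ℤ)) + 5 / φ) / 5 <
        (-(2 : ℝ) ^ (2 - 2 * (i : ℤ)) - (2 : ℝ) ^ (1 - 2 * (i : ℤ))) / 8 := by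
  have hφ0 : (0:ℝ) < φ := lt_of_lt_of_le (by norm_num) hφ
  set A : ℝ := (2:ℝ) ^ (2 - 2 * (i : ℤ)) with hA
  set B : ℝ := (2:ℝ) ^ (1 - 2 * (i : ℤ)) with hB
  have hAB : A = 2 * B := by
    rw [hA, hB, show (2 - 2 * (i : ℤ)) = (1 - 2 * (i : ℤ)) + 1 by ring,
      zpow_add_one₀ (by norm_num : (2:ℝ) ≠ 0)]
    ring
  have hprod : (128 : ℝ) ≤ φ * A := by
    have h1 : ((2:ℝ) ^ (2 * i + 5)) * A ≤ φ * A := by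
      apply mul_le_mul_of_nonneg_right hiφ (le_of_lt (by positivity))
    refine le_trans (le_of_eq ?_) h1
    rw [hA, ← zpow_natCast (2:ℝ) (2 * i + 5), ← zpow_add₀ (by norm_num : (2:ℝ) ≠ 0)]
    norm_num
    rw [show (2 * (i:ℤ) + 5 + (2 - 2 * (i:ℤ))) = 7 by ring]
    norm_num
  have h80 : 80 / φ < A := by
    rw [div_lt_iff₀ hφ0]
    nlinarith
  have hfrac : (1:ℝ)/φ = (1/φ) := rfl
  have hkey : (-A + 5 / φ) / 5 < (-A - B) / 8 := by
    rw [div_lt_div_iff₀ (by norm_num) (by norm_num)]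
    have h5 : (5:ℝ)/φ = 5 * (1/φ) := by ring
    have h80' : 80 * (1/φ) < A := by
      have : (80:ℝ)/φ = 80 * (1/φ) := by ring
      linarith [this ▸ h80]
    nlinarith
  constructor
  · intro p₁ p₂ p₃ p₄ q r₁ r₂ r₃ r₄ r₅ r₆ q' s hp₁ hp₂ hp₃ hp₄ hq hr₁ hr₂ hr₃ hr₄ hr₅ hr₆ hq' hs
    have h5 : (5:ℝ)/φ = 5 * (1/φ) := by ring
    have hL : (q + p₁ + p₂ + p₃ + p₄) / 5 ≤ (-A + 5 / φ) / 5 := by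
      have := hq.2
      have := hp₁.2; have := hp₂.2; have := hp₃.2; have := hp₄.2
      rw [h5]
      linarith [hq.2, hp₁.2, hp₂.2, hp₃.2, hp₄.2]
    have hR : (-A - B) / 8 ≤ (q' + s + r₁ + r₂ + r₃ + r₄ + r₅ + r₆) / 8 := by
      linarith [hq'.1, hs.1, hr₁.1, hr₂.1, hr₃.1, hr₄.1, hr₅.1, hr₆.1]
    linarith
  · exact hkey
end

section
/- Let n ≥ 4 be an integer, let φ = 400000·n², let r = (n−3)/n, and let i be an integer with 1 ≤ i ≤ n. Then for all reals p₁, …, p_{n+4} ∈ [0, 1/φ], q ∈ [−r^{2i−2}, −r^{2i−2} + 1/φ], s₁, …, s_{n+3} ∈ [0, 1/φ], w ∈ [−r^{2i−1}, −r^{2i−1} + 1/φ], and t ∈ [−1/φ, 0]: q + ∑_{j=1}^{n+4} p_j < w + ∑_{j=1}^{n+3} s_j + t. In particular (worst case) −r^{2i−2} + (n+5)/φ < −r^{2i−1} − 1/φ. -/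
/-- Lemma 12: in the instance `H` (with `φ = 400000·n²`, `r = (n−3)/n`), the
`(n+5)`-edge cycle `C₁ = (d,wᵢ,a₁,…,a₂,u,v,d)` has lower total cost than the
`(n+5)`-edge cycle `C₂ = (b,xᵢ,c₁,…,c₂,v,u,b)`, for every realization of the edge
costs in their intervals. -/
theorem stmt13 (n : ℕ) (hn : 4 ≤ n) (φ r : ℝ)
    (hφ : φ = 400000 * (n : ℝ) ^ 2) (hr : r = ((n : ℝ) - 3) / n)
    (i : ℕ) (hi1 : 1 ≤ i) (hin : i ≤ n) :
    (∀ (p : Fin (n + 4) → ℝ) (q : ℝ) (s : Fin (n + 3) → ℝ) (w t : ℝ),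
        (∀ j, p j ∈ Set.Icc (0 : ℝ) (1 / φ)) →
        q ∈ Set.Icc (-r ^ (2 * i - 2)) (-r ^ (2 * i - 2) + 1 / φ) →
        (∀ j, s j ∈ Set.Icc (0 : ℝ) (1 / φ)) →
        w ∈ Set.Icc (-r ^ (2 * i - 1)) (-r ^ (2 * i - 1) + 1 / φ) →
        t ∈ Set.Icc (-(1 / φ)) (0 : ℝ) →
        q + ∑ j, p j < w + ∑ j, s j + t)
    ∧ -r ^ (2 * i - 2) + ((n : ℝ) + 5) / φ < -r ^ (2 * i - 1) - 1 / φ := by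
  have hn4 : (4 : ℝ) ≤ (n : ℝ) := by exact_mod_cast hn
  have hnpos : (0 : ℝ) < (n : ℝ) := by linarith
  have hφpos : 0 < φ := by rw [hφ]; positivity
  set x : ℝ := 3 / (n : ℝ) with hxdef
  have hx0 : 0 ≤ x := by positivity
  have hx34 : x ≤ 3 / 4 := by
    rw [hxdef, div_le_div_iff₀ hnpos (by norm_num)]
    linarith
  have hrx : r = 1 - x := by
    rw [hr, hxdef]
    field_simp
  have hr0 : 0 ≤ r := by rw [hrx]; linarith
  have hr1 : r ≤ 1 := by rw [hrx]; linarith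
  -- Taylor lower bound for exp (4x)
  have htay : 1 + 4*x + (4*x)^2/2 + (4*x)^3/6 + (4*x)^4/24 ≤ Real.exp (4*x) := by
    have h := Real.sum_le_exp_of_nonneg (by positivity : (0:ℝ) ≤ 4*x) 5
    rw [Finset.sum_range_succ, Finset.sum_range_succ, Finset.sum_range_succ,
      Finset.sum_range_succ, Finset.sum_range_one] at h
    norm_num [Nat.factorial] at h
    nlinarith [h]
  have hpoly : 1 ≤ (1-x)^2 * (1 + 4*x + (4*x)^2/2 + (4*x)^3/6 + (4*x)^4/24) := by
    have h34 : 0 ≤ 3/4 - x := by linarith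
    nlinarith [mul_nonneg hx0 hx0, mul_nonneg (mul_nonneg hx0 hx0) hx0,
      mul_nonneg (mul_nonneg (mul_nonneg hx0 hx0) hx0) hx0,
      mul_nonneg h34 (mul_nonneg (mul_nonneg hx0 hx0) hx0),
      mul_nonneg h34 (mul_nonneg (mul_nonneg (mul_nonneg hx0 hx0) hx0) hx0),
      mul_nonneg (mul_nonneg h34 h34) (mul_nonneg (mul_nonneg hx0 hx0) hx0),
      mul_nonneg (mul_nonneg h34 h34) (mul_nonneg hx0 hx0),
      sq_nonneg (x - 3/4), mul_nonneg h34 hx0]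
  have hq2 : Real.exp (-(4*x)) ≤ (1-x)^2 := by
    rw [Real.exp_neg, inv_eq_one_div, div_le_iff₀ (Real.exp_pos _)]
    calc (1:ℝ) ≤ (1-x)^2 * (1 + 4*x + (4*x)^2/2 + (4*x)^3/6 + (4*x)^4/24) := hpoly
      _ ≤ (1-x)^2 * Real.exp (4*x) := mul_le_mul_of_nonneg_left htay (sq_nonneg _)
  -- r^(2n) ≥ exp(-12)
  have hxn : x * (n : ℝ) = 3 := by
    rw [hxdef]; field_simp
  have h2n : Real.exp (-12) ≤ r ^ (2*n) := by
    have h5 : (Real.exp (-(4*x)))^n ≤ ((1-x)^2)^n :=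
      pow_le_pow_left₀ (Real.exp_pos _).le hq2 n
    have h6 : (Real.exp (-(4*x)))^n = Real.exp (-12) := by
      rw [← Real.exp_nat_mul]
      congr 1
      have h7 : (n : ℝ) * -(4*x) = -4 * (x * n) := by ring
      rw [h7, hxn]; norm_num
    calc Real.exp (-12) = (Real.exp (-(4*x)))^n := h6.symm
      _ ≤ ((1-x)^2)^n := h5
      _ = r ^ (2*n) := by rw [hrx, ← pow_mul]
  -- exp(-12) > 1/190000
  have hexp : (1:ℝ)/190000 < Real.exp (-12) := by
    have h12 : Real.exp 12 < 190000 := by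
      have he : Real.exp 12 = (Real.exp 1)^12 := by
        rw [← Real.exp_nat_mul]; norm_num
      have hlt : (Real.exp 1)^12 < 2.7182818286^12 :=
        pow_lt_pow_left₀ Real.exp_one_lt_d9 (Real.exp_pos 1).le (by norm_num)
      have hnum : (2.7182818286 : ℝ)^12 < 190000 := by norm_num
      linarith [he ▸ hlt]
    rw [Real.exp_neg, one_div, inv_lt_inv₀ (by norm_num) (Real.exp_pos 12)]
    exact h12
  have hmono : r ^ (2*n) ≤ r ^ (2*i - 2) :=
    pow_le_pow_of_le_one hr0 hr1 (by omega)
  have hA : (1:ℝ)/190000 < r ^ (2*i - 2) :=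
    lt_of_lt_of_le (lt_of_lt_of_le hexp h2n) hmono
  have hpow : r ^ (2*i - 1) = r ^ (2*i - 2) * r := by
    rw [← pow_succ]
    congr 1
    omega
  -- key inequality
  have hkey : -r ^ (2 * i - 2) + ((n : ℝ) + 5) / φ < -r ^ (2 * i - 1) - 1 / φ := by
    rw [hpow, hφ]
    have h3 : ((n:ℝ)+6) / (400000 * (n:ℝ)^2) < r ^ (2*i-2) * (3/(n:ℝ)) := by
      rw [div_lt_iff₀ (by positivity)]
      have h9 : r ^ (2*i-2) * (3/(n:ℝ)) * (400000*(n:ℝ)^2)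
          = r ^ (2*i-2) * (1200000*(n:ℝ)) := by
        field_simp
        ring
      rw [h9]
      have h10 : (1:ℝ)/190000 * (1200000*(n:ℝ)) < r ^ (2*i-2) * (1200000*(n:ℝ)) :=
        mul_lt_mul_of_pos_right hA (by positivity)
      nlinarith [h10, hn4]
    have hrval : r = 1 - 3/(n:ℝ) := by rw [hrx, hxdef]
    have hr3 : r ^ (2*i-2) * r = r ^ (2*i-2) - r ^ (2*i-2) * (3/(n:ℝ)) := by
      have h11 : r ^ (2*i-2) * r = r ^ (2*i-2) * (1 - 3/(n:ℝ)) := by rw [← hrval]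
      rw [h11]; ring
    have heq2 : ((n:ℝ)+5) / (400000 * (n:ℝ)^2) + 1 / (400000 * (n:ℝ)^2)
        = ((n:ℝ)+6) / (400000 * (n:ℝ)^2) := by ring
    linarith
  refine ⟨?_, hkey⟩
  intro p q s w t hp hq hs hw ht
  have hsump : ∑ j, p j ≤ ((n:ℝ) + 4) * (1/φ) := by
    calc ∑ j, p j ≤ ∑ _j : Fin (n+4), 1/φ :=
          Finset.sum_le_sum fun j _ => (hp j).2
      _ = ((n:ℝ) + 4) * (1/φ) := by
          rw [Finset.sum_const, Finset.card_univ, Fintype.card_fin, nsmul_eq_mul]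
          push_cast
          ring
  have hsums : 0 ≤ ∑ j, s j := Finset.sum_nonneg fun j _ => (hs j).1
  have h1 : q ≤ -r ^ (2*i-2) + 1/φ := hq.2
  have h2 : -r ^ (2*i-1) ≤ w := hw.1
  have h3 : -(1/φ) ≤ t := ht.1
  have hstep : -r ^ (2*i-2) + 1/φ + ((n:ℝ)+4) * (1/φ)
      = -r ^ (2*i-2) + ((n:ℝ)+5)/φ := by ring
  linarith
end

section
/- Let n ≥ 4 be an integer, let φ = 400000·n², let r = (n−3)/n, and let i be an integer with 1 ≤ i and i + 1 ≤ n. Then for all reals s₁, …, s_{n+3} ∈ [0, 1/φ], w ∈ [−r^{2i−1}, −r^{2i−1} + 1/φ], t ∈ [−1/φ, 0], p₁, …, p_{n+4} ∈ [0, 1/φ], and q ∈ [−r^{2i}, −r^{2i} + 1/φ]: w + ∑_{j=1}^{n+3} s_j + t < q + ∑_{j=1}^{n+4} p_j. In particular (worst case) −r^{2i−1} + (n+4)/φ < −r^{2i}. -/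
/-!
With `r = 1 - 3/n`, the worst case of the comparison is `r^(2i-1) - r^(2i) > (n+4)/φ`.
The left side is `r^(2i-1) · 3/n ≥ r^(2n) · 3/n`, so it suffices that `r^(2n) > 1/600000`.
For `n ≥ 6` this follows from `1 - x ≥ exp(-2x)` on `[0, 1/2]`, giving `r^(2n) ≥ exp(-12)`;
the cases `n = 4, 5` are numerical.
-/

open Real

lemma exp_neg_two_mul_le_one_sub {x : ℝ} (hx₀ : 0 ≤ x) (hx : x ≤ 1 / 2) :
    exp (-(2 * x)) ≤ 1 - x := by
  have hpos : 0 < 1 + 2 * x := by linarith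
  calc exp (-(2 * x)) = (exp (2 * x))⁻¹ := exp_neg _
    _ ≤ (1 + 2 * x)⁻¹ := by
        gcongr
        linarith [add_one_le_exp (2 * x)]
    _ ≤ 1 - x := by
        rw [inv_le_iff_one_le_mul₀ hpos]
        nlinarith

lemma exp_twelve_lt : exp 12 < 600000 :=
  calc exp 12 = exp 1 ^ 12 := by rw [← exp_nat_mul]; norm_num
    _ < 2.7182818286 ^ 12 := by gcongr; exact exp_one_lt_d9
    _ < 600000 := by norm_num

lemma inv_600000_lt_pow_two_mul (n : ℕ) (hn : 4 ≤ n) :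
    1 / 600000 < (((n : ℝ) - 3) / n) ^ (2 * n) := by
  rcases lt_or_ge n 6 with hn6 | hn6
  · interval_cases n <;> norm_num
  have hn6' : (6 : ℝ) ≤ n := by exact_mod_cast hn6
  have hn0 : (n : ℝ) ≠ 0 := by positivity
  have hr : ((n : ℝ) - 3) / n = 1 - 3 / n := by field_simp
  have hbase : exp (-(2 * (3 / n))) ≤ ((n : ℝ) - 3) / n := by
    rw [hr]
    apply exp_neg_two_mul_le_one_sub (by positivity)
    rw [div_le_iff₀ (by positivity)]
    linarith
  calc (1 : ℝ) / 600000 < exp (-12) := by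
        rw [exp_neg, one_div]
        exact inv_strictAnti₀ (exp_pos 12) exp_twelve_lt
    _ = exp (-(2 * (3 / n))) ^ (2 * n) := by
        rw [← exp_nat_mul]
        congr 1
        push_cast
        field_simp
        ring
    _ ≤ (((n : ℝ) - 3) / n) ^ (2 * n) := by gcongr

lemma div_lt_pow_sub_pow_succ (n k : ℕ) (hn : 4 ≤ n) (hk : k ≤ 2 * n) :
    ((n : ℝ) + 4) / (400000 * (n : ℝ) ^ 2) <
      (((n : ℝ) - 3) / n) ^ k - (((n : ℝ) - 3) / n) ^ (k + 1) := by
  set r : ℝ := ((n : ℝ) - 3) / n with hr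
  have hn4 : (4 : ℝ) ≤ n := by exact_mod_cast hn
  have hnpos : (0 : ℝ) < n := by linarith
  have hr₀ : 0 ≤ r := div_nonneg (by linarith) hnpos.le
  have hr₁ : r ≤ 1 := by rw [hr, div_le_one hnpos]; linarith
  have hgap : r ^ k - r ^ (k + 1) = r ^ k * (3 / n) := by
    rw [pow_succ, hr]
    field_simp
    ring
  calc ((n : ℝ) + 4) / (400000 * (n : ℝ) ^ 2) ≤ 1 / 600000 * (3 / n) := by
        rw [div_le_iff₀ (by positivity)]
        field_simp
        nlinarith
    _ < r ^ (2 * n) * (3 / n) := by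
        gcongr
        exact inv_600000_lt_pow_two_mul n hn
    _ ≤ r ^ k * (3 / n) :=
        mul_le_mul_of_nonneg_right (pow_le_pow_of_le_one hr₀ hr₁ hk) (by positivity)
    _ = r ^ k - r ^ (k + 1) := hgap.symm

lemma sum_fin_le_card_mul {m : ℕ} {c : ℝ} {s : Fin m → ℝ} (hs : ∀ j, s j ≤ c) :
    ∑ j, s j ≤ m * c := by
  simpa using Finset.sum_le_card_nsmul Finset.univ s c fun j _ => hs j

/-- Lemma 13: in the instance `H` (with `φ = 400000·n²`, `r = (n−3)/n`), the
`(n+5)`-edge cycle `C₁ = (b,xᵢ,c₁,…,c₂,v,u,b)` has lower total cost than the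
`(n+5)`-edge cycle `C₂ = (d,w_{i+1},a₁,…,a₂,u,v,d)`, for every realization of the edge
costs in their intervals. -/
theorem stmt14 (n : ℕ) (hn : 4 ≤ n) (φ r : ℝ)
    (hφ : φ = 400000 * (n : ℝ) ^ 2) (hr : r = ((n : ℝ) - 3) / n)
    (i : ℕ) (hi1 : 1 ≤ i) (hin : i + 1 ≤ n) :
    (∀ (s : Fin (n + 3) → ℝ) (w t : ℝ) (p : Fin (n + 4) → ℝ) (q : ℝ),
        (∀ j, s j ∈ Set.Icc (0 : ℝ) (1 / φ)) →
        w ∈ Set.Icc (-r ^ (2 * i - 1)) (-r ^ (2 * i - 1) + 1 / φ) →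
        t ∈ Set.Icc (-(1 / φ)) (0 : ℝ) →
        (∀ j, p j ∈ Set.Icc (0 : ℝ) (1 / φ)) →
        q ∈ Set.Icc (-r ^ (2 * i)) (-r ^ (2 * i) + 1 / φ) →
        w + ∑ j, s j + t < q + ∑ j, p j)
    ∧ -r ^ (2 * i - 1) + ((n : ℝ) + 4) / φ < -r ^ (2 * i) := by
  have hgap := div_lt_pow_sub_pow_succ n (2 * i - 1) hn (by omega)
  rw [show 2 * i - 1 + 1 = 2 * i by omega, ← hφ, ← hr] at hgap
  refine ⟨fun s w t p q hs hw ht hp hq => ?_, by linarith⟩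
  have hs_sum : ∑ j, s j ≤ ((n + 3 : ℕ) : ℝ) * (1 / φ) := sum_fin_le_card_mul fun j => (hs j).2
  have hp_sum : 0 ≤ ∑ j, p j := Finset.sum_nonneg fun j _ => (hp j).1
  have hworst : ((n : ℝ) + 4) / φ = 1 / φ + ((n : ℝ) + 3) * (1 / φ) := by ring
  push_cast at hs_sum
  linarith [hw.2, ht.2, hq.1]
end

section
/- Let n ≥ 4 be an integer, let φ = 400000·n², let r = (n−3)/n, and let i be an integer with 1 ≤ i ≤ n. Then for all reals p₁, …, p_{n+4} ∈ [0, 1/φ], q ∈ [−r^{2i−2}, −r^{2i−2} + 1/φ], s₁, …, s_{2n+6} ∈ [0, 1/φ], q' ∈ [−r^{2i−2}, −r^{2i−2} + 1/φ], and w ∈ [−r^{2i−1}, −r^{2i−1} + 1/φ]: (q + ∑_{j=1}^{n+4} p_j)/(n+5) < (q' + w + ∑_{j=1}^{2n+6} s_j)/(2n+8). In particular (worst case) (−r^{2i−2} + (n+5)/φ)/(n+5) < (−r^{2i−2} − r^{2i−1})/(2n+8). -/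
/-!
Write `A = r^(2i-2)`, so that `r^(2i-1) = A r`. Raising every edge cost of `C₁` to the top of
its interval and lowering every edge cost of `C₂` to the bottom of its interval reduces the
claim to the worst case, which rearranges to `A (n+15) · 400000 n > (n+5)(2n+8)`. This holds
because `A ≥ r^(2n-2) = (1 + 3/m)^(-(2m+4))` with `m = n-3`, and `(1 + 3/m)^m ≤ e³` bounds
this below by `1/(27² · 4⁴) > 1/200000`.
-/

open Real Finset

lemma one_add_three_div_pow_lt (m : ℕ) (hm : 1 ≤ m) :
    (1 + 3 / (m : ℝ)) ^ (2 * m + 4) < 200000 := by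
  have hm' : (1 : ℝ) ≤ m := by exact_mod_cast hm
  have h_exp : (1 + 3 / (m : ℝ)) ^ m ≤ exp 3 := by
    simpa [sub_eq_add_neg, neg_div] using
      one_sub_div_pow_le_exp_neg (n := m) (t := -3) (by linarith)
  have h_base : 1 + 3 / (m : ℝ) ≤ 4 := by
    have : 3 / (m : ℝ) ≤ 3 := div_le_self (by norm_num) hm'
    linarith
  have h_e3 : exp 3 < 27 := by
    calc exp 3 = exp 1 ^ 3 := by rw [← exp_nat_mul]; norm_num
      _ < 3 ^ 3 := by gcongr; exact exp_one_lt_three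
      _ = 27 := by norm_num
  calc (1 + 3 / (m : ℝ)) ^ (2 * m + 4)
        = ((1 + 3 / (m : ℝ)) ^ m) ^ 2 * (1 + 3 / (m : ℝ)) ^ 4 := by ring
    _ ≤ exp 3 ^ 2 * 4 ^ 4 := by gcongr
    _ < 27 ^ 2 * 4 ^ 4 := by gcongr
    _ ≤ 200000 := by norm_num

lemma one_div_lt_sub_three_div_pow (n : ℕ) (hn : 4 ≤ n) :
    1 / 200000 < (((n : ℝ) - 3) / n) ^ (2 * n - 2) := by
  obtain ⟨m, rfl⟩ : ∃ m, n = m + 3 := ⟨n - 3, by omega⟩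
  have hm : (1 : ℝ) ≤ m := by exact_mod_cast (by omega : 1 ≤ m)
  have h_base : ((m + 3 : ℕ) - 3 : ℝ) / (m + 3 : ℕ) = (1 + 3 / (m : ℝ))⁻¹ := by
    push_cast
    field_simp
    ring
  rw [h_base, show 2 * (m + 3) - 2 = 2 * m + 4 by omega, inv_pow, one_div]
  exact inv_strictAnti₀ (by positivity) (one_add_three_div_pow_lt m (by omega))

lemma worst_case_mean_lt (n A : ℝ) (hn : 4 ≤ n) (hA : 1 / 200000 < A) :
    (-A + (n + 5) / (400000 * n ^ 2)) / (n + 5) <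
      (-A - A * ((n - 3) / n)) / (2 * n + 8) := by
  have hn0 : 0 < n := by linarith
  rw [div_lt_div_iff₀ (by linarith) (by linarith), ← sub_pos]
  have h_expand :
      (-A - A * ((n - 3) / n)) * (n + 5) - (-A + (n + 5) / (400000 * n ^ 2)) * (2 * n + 8) =
        (A * (n + 15) * (400000 * n) - (n + 5) * (2 * n + 8)) / (400000 * n ^ 2) := by
    field_simp
    ring
  rw [h_expand]
  have h_rhs : (n + 5) * (2 * n + 8) ≤ 2 * n * (n + 15) := by nlinarith
  have h_lhs : 2 * n * (n + 15) < A * (n + 15) * (400000 * n) := by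
    have : 0 < n * (n + 15) := by positivity
    nlinarith
  exact div_pos (sub_pos.mpr (h_rhs.trans_lt h_lhs)) (by positivity)

/-- Lemma 14: in the instance `H` (with `φ = 400000·n²`, `r = (n−3)/n`), the
`(n+5)`-edge cycle `C₁ = (d,wᵢ,a,u,v,d)` has lower mean cost than the `(2n+8)`-edge
cycle `C₂ = (d,wᵢ,a,u,b,xᵢ,c,v,d)`, for every realization of the edge costs in their
intervals. -/
theorem stmt15 (n : ℕ) (hn : 4 ≤ n) (φ r : ℝ)
    (hφ : φ = 400000 * (n : ℝ) ^ 2) (hr : r = ((n : ℝ) - 3) / n)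
    (i : ℕ) (hi1 : 1 ≤ i) (hin : i ≤ n) :
    (∀ (p : Fin (n + 4) → ℝ) (q : ℝ) (s : Fin (2 * n + 6) → ℝ) (q' w : ℝ),
        (∀ j, p j ∈ Set.Icc (0 : ℝ) (1 / φ)) →
        q ∈ Set.Icc (-r ^ (2 * i - 2)) (-r ^ (2 * i - 2) + 1 / φ) →
        (∀ j, s j ∈ Set.Icc (0 : ℝ) (1 / φ)) →
        q' ∈ Set.Icc (-r ^ (2 * i - 2)) (-r ^ (2 * i - 2) + 1 / φ) →
        w ∈ Set.Icc (-r ^ (2 * i - 1)) (-r ^ (2 * i - 1) + 1 / φ) →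
        (q + ∑ j, p j) / ((n : ℝ) + 5) < (q' + w + ∑ j, s j) / (2 * (n : ℝ) + 8))
    ∧ (-r ^ (2 * i - 2) + ((n : ℝ) + 5) / φ) / ((n : ℝ) + 5) <
        (-r ^ (2 * i - 2) - r ^ (2 * i - 1)) / (2 * (n : ℝ) + 8) := by
  have hn' : (4 : ℝ) ≤ n := by exact_mod_cast hn
  have hr0 : 0 ≤ r := by rw [hr]; apply div_nonneg <;> linarith
  have hr1 : r ≤ 1 := by rw [hr, div_le_one (by linarith)]; linarith
  have hA : 1 / 200000 < r ^ (2 * i - 2) := by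
    rw [hr] at hr0 hr1 ⊢
    exact (one_div_lt_sub_three_div_pow n hn).trans_le (pow_le_pow_of_le_one hr0 hr1 (by omega))
  have h_pow : r ^ (2 * i - 1) = r ^ (2 * i - 2) * r := by
    rw [← pow_succ, show 2 * i - 2 + 1 = 2 * i - 1 by omega]
  have key : (-r ^ (2 * i - 2) + ((n : ℝ) + 5) / φ) / ((n : ℝ) + 5) <
      (-r ^ (2 * i - 2) - r ^ (2 * i - 1)) / (2 * (n : ℝ) + 8) := by
    rw [h_pow, hφ]
    rw [hr] at hA ⊢
    exact worst_case_mean_lt n _ hn' hA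
  refine ⟨fun p q s q' w hp hq hs hq' hw => ?_, key⟩
  have h_sum_p : ∑ j, p j ≤ ((n : ℝ) + 4) * (1 / φ) := by
    simpa using sum_le_card_nsmul univ p (1 / φ) fun j _ => (hp j).2
  have h_sum_s : 0 ≤ ∑ j, s j := sum_nonneg fun j _ => (hs j).1
  calc (q + ∑ j, p j) / ((n : ℝ) + 5)
        ≤ (-r ^ (2 * i - 2) + ((n : ℝ) + 5) / φ) / ((n : ℝ) + 5) := by
        gcongr ?_ / _
        linarith [hq.2, show ((n : ℝ) + 5) / φ = 1 / φ + ((n : ℝ) + 4) * (1 / φ) by ring]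
    _ < (-r ^ (2 * i - 2) - r ^ (2 * i - 1)) / (2 * (n : ℝ) + 8) := key
    _ ≤ (q' + w + ∑ j, s j) / (2 * (n : ℝ) + 8) := by
        gcongr ?_ / _
        linarith [hq'.1, hw.1]
end
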